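/- Let φ ∈ Der(𝔑, 𝒲) be ℤ-homogeneous of even ℤ-degree with φ(𝔑_[−1]) = 0. Then there exist λ_1,…,λ_m ∈ F such that (φ − Σ_{r=1}^{m} λ_r·Ψ^(r))(D_H(x_i x_j)) = 0 for all i, j ∈ Y_0, where each Ψ^(r) is restricted to 𝔑. -/
import Mathlib


/-!
A concrete model of the divided power superalgebra `O(2m,n;t)` over a field `F` of
characteristic `p`, the generalized Witt superalgebra `W(2m,n;t)`, the Hamiltonian
superalgebra `H(2m,n;t)`, their even parts `𝒲`, `𝓗`, the ideal `𝔑`, and the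
exceptional maps `Φ`, `Θ`, `Ψ`, used in
"Derivations for the even part of the Hamiltonian superalgebra in positive characteristic".

Elements of `O` are recorded by their coordinates with respect to the standard basis
`x^(α) x^u`, where `α i < p ^ t i` and `u ⊆ {1,…,n}` (odd variables).
A superderivation `Σ aᵢ ∂ᵢ ∈ W` is recorded by its tuple of coefficients `aᵢ ∈ O`.
-/

namespace HamEven

/-- Multi-indices `α` with `α i ≤ π i = p ^ t i - 1`. -/
abbrev MIdx (p m : ℕ) (t : Fin (2 * m) → ℕ) : Type := ∀ i : Fin (2 * m), Fin (p ^ t i)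

/-- Basis indices `(α, u)` of `O(2m,n;t)`, i.e. `x^(α) x^u`. -/
abbrev BIdx (p m n : ℕ) (t : Fin (2 * m) → ℕ) : Type := MIdx p m t × Finset (Fin n)

/-- The underlying space of `O(2m,n;t)`: coordinates w.r.t. the basis `x^(α)x^u`. -/
abbrev O (p m n : ℕ) (t : Fin (2 * m) → ℕ) (F : Type) [Field F] : Type := BIdx p m n t → F

/-- The index set `Y = Y₀ ∪ Y₁` of the variables. -/
abbrev Y (m n : ℕ) : Type := Fin (2 * m) ⊕ Fin n

/-- The underlying space of `W(2m,n;t)`: a tuple `(aᵢ)` stands for `Σ aᵢ ∂ᵢ`. -/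
abbrev W (p m n : ℕ) (t : Fin (2 * m) → ℕ) (F : Type) [Field F] : Type := Y m n → O p m n t F

/-- The sign `ε(u,v)` with `x^u x^v = ε(u,v) x^(u ∪ v)` for disjoint `u, v`. -/
def sgn (n : ℕ) (F : Type) [Field F] (u v : Finset (Fin n)) : F :=
  (-1 : F) ^ ((u ×ˢ v).filter fun q => q.2 < q.1).card

/-- Multiplication of the divided power superalgebra `O(2m,n;t)`:
`x^(α)x^u · x^(β)x^v = ε(u,v) (∏ᵢ binom (αᵢ+βᵢ) αᵢ) x^(α+β) x^(u∪v)` for disjoint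
`u,v` (and `0` if `u ∩ v ≠ ∅` or `α + β ∉ A`). -/
def mul (p m n : ℕ) (t : Fin (2 * m) → ℕ) (F : Type) [Field F]
    (f g : O p m n t F) : O p m n t F := fun b =>
  ∑ α : MIdx p m t, ∑ u ∈ b.2.powerset,
    if ∀ i, (α i : ℕ) ≤ (b.1 i : ℕ) then
      sgn n F u (b.2 \ u) * (∏ i, ((b.1 i : ℕ).choose (α i : ℕ) : F)) *
        f (α, u) *
        g (⟨fun i => (⟨(b.1 i : ℕ) - (α i : ℕ),
              lt_of_le_of_lt (Nat.sub_le _ _) (b.1 i).isLt⟩ : Fin (p ^ t i)), b.2 \ u⟩)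
    else 0

/-- The superderivation `∂ᵢ` for an even index `i ∈ Y₀`. -/
def pdE (p m n : ℕ) (t : Fin (2 * m) → ℕ) (F : Type) [Field F]
    (i : Fin (2 * m)) (f : O p m n t F) : O p m n t F := fun b =>
  if h : (b.1 i : ℕ) + 1 < p ^ t i then
    f (⟨Function.update b.1 i (⟨(b.1 i : ℕ) + 1, h⟩ : Fin (p ^ t i)), b.2⟩)
  else 0

/-- The superderivation `∂ₖ` for an odd index `k ∈ Y₁`. -/
def pdO (p m n : ℕ) (t : Fin (2 * m) → ℕ) (F : Type) [Field F]
    (k : Fin n) (f : O p m n t F) : O p m n t F := fun b =>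
  if k ∈ b.2 then 0
  else ((-1 : F) ^ (b.2.filter fun j => j < k).card) * f (b.1, insert k b.2)

/-- The superderivation `∂ᵢ`, `i ∈ Y`. -/
def pd (p m n : ℕ) (t : Fin (2 * m) → ℕ) (F : Type) [Field F]
    (i : Y m n) (f : O p m n t F) : O p m n t F :=
  match i with
  | Sum.inl i => pdE p m n t F i f
  | Sum.inr k => pdO p m n t F k f

/-- The action of `D = Σ aᵢ ∂ᵢ ∈ W` on `O`: `D(f) = Σ aᵢ ∂ᵢ(f)`. -/
def act (p m n : ℕ) (t : Fin (2 * m) → ℕ) (F : Type) [Field F]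
    (D : W p m n t F) (f : O p m n t F) : O p m n t F :=
  ∑ i : Y m n, mul p m n t F (D i) (pd p m n t F i f)

/-- Projection of `f ∈ O` onto its even part (w.r.t. the ℤ₂-grading). -/
def evenO (p m n : ℕ) (t : Fin (2 * m) → ℕ) (F : Type) [Field F]
    (f : O p m n t F) : O p m n t F := fun b => if b.2.card % 2 = 0 then f b else 0

/-- Projection of `f ∈ O` onto its odd part. -/
def oddO (p m n : ℕ) (t : Fin (2 * m) → ℕ) (F : Type) [Field F]
    (f : O p m n t F) : O p m n t F := fun b => if b.2.card % 2 = 1 then f b else 0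

/-- Projection of `D ∈ W` onto its odd part (the coefficient of `∂ᵢ` is taken of
parity opposite to that of `∂ᵢ`). -/
def oddW (p m n : ℕ) (t : Fin (2 * m) → ℕ) (F : Type) [Field F]
    (D : W p m n t F) : W p m n t F := fun i =>
  match i with
  | Sum.inl j => oddO p m n t F (D (Sum.inl j))
  | Sum.inr k => evenO p m n t F (D (Sum.inr k))

/-- The super-bracket of `W`.  On homogeneous `D = Σ aᵢ∂ᵢ`, `E = Σ bⱼ∂ⱼ` it is
`[D,E] = Σ D(bⱼ)∂ⱼ - (-1)^{p(D)p(E)} Σ E(aᵢ)∂ᵢ`, extended bilinearly; this gives the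
closed formula `[D,E] = D(E) - E(D) + 2 E₁(D₁)` used here. -/
def bra (p m n : ℕ) (t : Fin (2 * m) → ℕ) (F : Type) [Field F]
    (D E : W p m n t F) : W p m n t F := fun j =>
  act p m n t F D (E j) - act p m n t F E (D j)
    + act p m n t F (oddW p m n t F E) (oddW p m n t F D j)
    + act p m n t F (oddW p m n t F E) (oddW p m n t F D j)

/-- `τ(i)` for `i ∈ Y₀`. -/
def tauF (m : ℕ) (F : Type) [Field F] (i : Fin (2 * m)) : F :=
  if (i : ℕ) < m then 1 else -1

/-- `i ↦ i′` on `Y₀`. -/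
def primeE (m : ℕ) (i : Fin (2 * m)) : Fin (2 * m) :=
  if h : (i : ℕ) < m then ⟨(i : ℕ) + m, by have := i.isLt; omega⟩
  else ⟨(i : ℕ) - m, by have := i.isLt; omega⟩

/-- The linear map `D_H : O → W`,
`D_H(a) = Σ_{i ∈ Y} τ(i) (-1)^{μ(i) p(a)} ∂ᵢ(a) ∂ᵢ′` (on ℤ₂-homogeneous `a`,
extended linearly): the coefficient of `∂ⱼ` is `τ(j′) (-1)^{μ(j′)p(a)} ∂_{j′}(a)`. -/
def DH (p m n : ℕ) (t : Fin (2 * m) → ℕ) (F : Type) [Field F]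
    (a : O p m n t F) : W p m n t F := fun j =>
  match j with
  | Sum.inl j' =>
      tauF m F (primeE m j') •
        (pdE p m n t F (primeE m j') (evenO p m n t F a)
          + pdE p m n t F (primeE m j') (oddO p m n t F a))
  | Sum.inr k =>
      pdO p m n t F k (evenO p m n t F a) - pdO p m n t F k (oddO p m n t F a)

/-- The basis element `x^(α) x^u` of `O`. -/
def xE (p m n : ℕ) (t : Fin (2 * m) → ℕ) (F : Type) [Field F]
    (α : MIdx p m t) (u : Finset (Fin n)) : O p m n t F := fun b =>
  if b = (α, u) then 1 else 0

/-- The element `x^ω = x_{2m+1} ⋯ x_{2m+n}` of `O`. -/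
def xOmega (p m n : ℕ) (t : Fin (2 * m) → ℕ) (F : Type) [Field F] : O p m n t F := fun b =>
  if (∀ i, (b.1 i : ℕ) = 0) ∧ b.2 = Finset.univ then 1 else 0

/-- The identity `1 ∈ O`. -/
def oneO (p m n : ℕ) (t : Fin (2 * m) → ℕ) (F : Type) [Field F] : O p m n t F := fun b =>
  if (∀ i, (b.1 i : ℕ) = 0) ∧ b.2 = ∅ then 1 else 0

/-- The odd variable `xₖ ∈ O`, `k ∈ Y₁`. -/
def xOdd (p m n : ℕ) (t : Fin (2 * m) → ℕ) (F : Type) [Field F] (k : Fin n) :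
    O p m n t F := fun b =>
  if (∀ i, (b.1 i : ℕ) = 0) ∧ b.2 = {k} then 1 else 0

/-- `Γ′ = Σ_{r ∈ Y₁} x_r ∂_r ∈ 𝒲`. -/
def GammaP (p m n : ℕ) (t : Fin (2 * m) → ℕ) (F : Type) [Field F] : W p m n t F := fun j =>
  match j with
  | Sum.inl _ => 0
  | Sum.inr k => xOdd p m n t F k

/-- The element `∂_r ∈ W` for `r ∈ Y₀`. -/
def delW (p m n : ℕ) (t : Fin (2 * m) → ℕ) (F : Type) [Field F] (r : Fin (2 * m)) :
    W p m n t F := fun j =>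
  if j = Sum.inl r then oneO p m n t F else 0

/-- `𝒲`, the even part of `W(2m,n;t)`: the term `a ∂ⱼ` with `a = x^(α)x^u` is even iff
`|u| + μ(j)` is even. -/
def calW (p m n : ℕ) (t : Fin (2 * m) → ℕ) (F : Type) [Field F] : Set (W p m n t F) :=
  {D | ∀ (j : Y m n) (b : BIdx p m n t),
    ¬ ((b.2.card + (match j with | Sum.inl _ => 0 | Sum.inr _ => 1)) % 2 = 0) → D j b = 0}

/-- The predicate `α = π`, i.e. `αᵢ = p ^ tᵢ - 1` for all `i`. -/
def isPi (p m : ℕ) (t : Fin (2 * m) → ℕ) (α : MIdx p m t) : Prop :=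
  ∀ i, (α i : ℕ) = p ^ t i - 1

/-- The predicate `α = q εᵢ`. -/
def isSingle (p m : ℕ) (t : Fin (2 * m) → ℕ) (α : MIdx p m t) (i : Fin (2 * m))
    (q : ℕ) : Prop :=
  (α i : ℕ) = q ∧ ∀ j, j ≠ i → (α j : ℕ) = 0

/-- `𝓗`, the even part of the Hamiltonian superalgebra `H(2m,n;t)`:
the span of the `D_H(x^(α)x^u)` with `|u|` even and `(α,u) ≠ (π,ω)`. -/
def calH (p m n : ℕ) (t : Fin (2 * m) → ℕ) (F : Type) [Field F] :
    Submodule F (W p m n t F) :=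
  Submodule.span F {D | ∃ (α : MIdx p m t) (u : Finset (Fin n)),
    Even u.card ∧ ¬(isPi p m t α ∧ u = Finset.univ) ∧ D = DH p m n t F (xE p m n t F α u)}

/-- The ideal `𝔑` of `𝓗`: the span of the `D_H(x^(α)x^u)` with `|u|` even,
`(α,u) ≠ (π,ω)` and `(α,u) ≠ (π,∅)`. -/
def frakN (p m n : ℕ) (t : Fin (2 * m) → ℕ) (F : Type) [Field F] :
    Submodule F (W p m n t F) :=
  Submodule.span F {D | ∃ (α : MIdx p m t) (u : Finset (Fin n)),
    Even u.card ∧ ¬(isPi p m t α ∧ u = Finset.univ) ∧ ¬(isPi p m t α ∧ u = ∅) ∧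
    D = DH p m n t F (xE p m n t F α u)}

/-- The ℤ-degree of the basis element `x^(α)x^u ∈ O`. -/
def degB (p m n : ℕ) (t : Fin (2 * m) → ℕ) (b : BIdx p m n t) : ℕ :=
  (∑ i, (b.1 i : ℕ)) + b.2.card

/-- `D ∈ W_[k]`: all coefficients of `D` are concentrated in `O`-degree `k + 1`. -/
def inDeg (p m n : ℕ) (t : Fin (2 * m) → ℕ) (F : Type) [Field F]
    (k : ℤ) (D : W p m n t F) : Prop :=
  ∀ (j : Y m n) (b : BIdx p m n t), (degB p m n t b : ℤ) - 1 ≠ k → D j b = 0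

/-- `D` lies in the top `W_[-1] ⊕ W_[0]` (so the order of its coefficients is `≤ 1`). -/
def inTop (p m n : ℕ) (t : Fin (2 * m) → ℕ) (F : Type) [Field F]
    (D : W p m n t F) : Prop :=
  ∀ (j : Y m n) (b : BIdx p m n t),
    (degB p m n t b : ℤ) ≠ 0 → (degB p m n t b : ℤ) ≠ 1 → D j b = 0

/-- `φ : S → W` is `F`-linear. -/
def IsLinearOn (p m n : ℕ) (t : Fin (2 * m) → ℕ) (F : Type) [Field F]
    (S : Submodule F (W p m n t F)) (φ : S → W p m n t F) : Prop :=
  (∀ x y : S, φ (x + y) = φ x + φ y) ∧ ∀ (c : F) (x : S), φ (c • x) = c • φ x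

/-- `φ ∈ Der(S, 𝒲)`: an `F`-linear map `S → 𝒲 ⊆ W` with
`φ([x,y]) = [x, φ(y)] - [y, φ(x)]` whenever `x, y, [x,y] ∈ S`. -/
def IsDerOn (p m n : ℕ) (t : Fin (2 * m) → ℕ) (F : Type) [Field F]
    (S : Submodule F (W p m n t F)) (φ : S → W p m n t F) : Prop :=
  IsLinearOn p m n t F S φ ∧ (∀ x : S, φ x ∈ calW p m n t F) ∧
  ∀ (x y : S) (h : bra p m n t F (↑x) (↑y) ∈ S),
    φ ⟨bra p m n t F (↑x) (↑y), h⟩ =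
      bra p m n t F (↑x) (φ y) - bra p m n t F (↑y) (φ x)

/-- `φ ∈ Der_[r](S, W)`: `φ` is ℤ-homogeneous of ℤ-degree `r`, i.e.
`φ(S_[k]) ⊆ W_[r+k]` for all `k`. -/
def IsHomogOn (p m n : ℕ) (t : Fin (2 * m) → ℕ) (F : Type) [Field F]
    (S : Submodule F (W p m n t F)) (r : ℤ) (φ : S → W p m n t F) : Prop :=
  ∀ (k : ℤ) (x : S), inDeg p m n t F k (↑x) → inDeg p m n t F (r + k) (φ x)

/-- The exceptional map `Φ⁽q⁾ᵢ : 𝓗 → 𝒲`, `D_H(f) ↦ ∂ᵢ^(p^q)(f) D_H(x^ω)`, extended to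
`W` using that the `∂ᵢ′`-coefficient of `D_H(f)` is `τ(i) ∂ᵢ(f)` for even `f`. -/
def PhiW (p m n : ℕ) (t : Fin (2 * m) → ℕ) (F : Type) [Field F]
    (i : Fin (2 * m)) (q : ℕ) (D : W p m n t F) : W p m n t F := fun j =>
  mul p m n t F
    ((pdE p m n t F i)^[p ^ q - 1] (tauF m F i • D (Sum.inl (primeE m i))))
    (DH p m n t F (xOmega p m n t F) j)

/-- The exceptional map `Θ⁽q⁾ᵢ : 𝓗 → 𝒲`,
`D_H(f) ↦ x^ω D_H(∂ᵢ^(p^q)(f)) = x^ω (ad ∂ᵢ)^(p^q)(D_H(f))`. -/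
def ThetaW (p m n : ℕ) (t : Fin (2 * m) → ℕ) (F : Type) [Field F]
    (i : Fin (2 * m)) (q : ℕ) (D : W p m n t F) : W p m n t F := fun j =>
  mul p m n t F (xOmega p m n t F) ((pdE p m n t F i)^[p ^ q] (D j))

/-- The exceptional map `Ψ⁽ⁱ⁾ : 𝓗 → 𝒲`, `D_H(f) ↦ ∂ᵢ∂ᵢ′(f) D_H(x^ω)`. -/
def PsiW (p m n : ℕ) (t : Fin (2 * m) → ℕ) (F : Type) [Field F]
    (i : Fin (2 * m)) (D : W p m n t F) : W p m n t F := fun j =>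
  mul p m n t F
    (pdE p m n t F (primeE m i) (tauF m F i • D (Sum.inl (primeE m i))))
    (DH p m n t F (xOmega p m n t F) j)

/-- `(ad ∂_r)^e : W → W`. -/
def adPow (p m n : ℕ) (t : Fin (2 * m) → ℕ) (F : Type) [Field F]
    (r : Fin (2 * m)) (e : ℕ) : W p m n t F → W p m n t F :=
  (fun D => bra p m n t F (delW p m n t F r) D)^[e]

/-! ### Auxiliary lemmas -/

section Aux

variable (p m n : ℕ) (t : Fin (2 * m) → ℕ) (F : Type) [Field F]

lemma midx_ext {β γ : MIdx p m t} (h : ∀ k, (β k : ℕ) = (γ k : ℕ)) : β = γ :=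
  funext fun k => Fin.ext (h k)

/-- decrement of a multi-index at `s` -/
def decE (β : MIdx p m t) (s : Fin (2 * m)) : MIdx p m t :=
  fun k => ⟨(β k : ℕ) - (if k = s then 1 else 0),
    lt_of_le_of_lt (Nat.sub_le _ _) (β k).isLt⟩

lemma decE_val (β : MIdx p m t) (s k : Fin (2 * m)) :
    ((decE p m t β s) k : ℕ) = if k = s then (β s : ℕ) - 1 else (β k : ℕ) := by
  unfold decE
  by_cases h : k = s
  · subst h; simp
  · simp [h]

lemma LpdE_zero (i : Fin (2 * m)) : pdE p m n t F i 0 = 0 := by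
  funext b; unfold pdE; split <;> rfl

lemma LpdO_zero (k : Fin n) : pdO p m n t F k 0 = 0 := by
  funext b; unfold pdO; split
  · rfl
  · simp

lemma Lpd_zero (i : Y m n) : pd p m n t F i 0 = 0 := by
  cases i with
  | inl s => exact LpdE_zero p m n t F s
  | inr k => exact LpdO_zero p m n t F k

lemma Lmul_zero_left (g : O p m n t F) : mul p m n t F 0 g = 0 := by
  funext b
  show (∑ α : MIdx p m t, ∑ u ∈ b.2.powerset, _) = (0:F)
  refine Finset.sum_eq_zero fun α _ => Finset.sum_eq_zero fun u _ => ?_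
  split <;> simp

lemma Lmul_zero_right (f : O p m n t F) : mul p m n t F f 0 = 0 := by
  funext b
  show (∑ α : MIdx p m t, ∑ u ∈ b.2.powerset, _) = (0:F)
  refine Finset.sum_eq_zero fun α _ => Finset.sum_eq_zero fun u _ => ?_
  split <;> simp

lemma Lact_zero_right (D : W p m n t F) : act p m n t F D 0 = 0 := by
  unfold act
  refine Finset.sum_eq_zero fun i _ => ?_
  rw [Lpd_zero, Lmul_zero_right]

lemma Lact_zero_left (f : O p m n t F) : act p m n t F 0 f = 0 := by
  unfold act
  refine Finset.sum_eq_zero fun i _ => ?_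
  show mul p m n t F 0 _ = 0
  rw [Lmul_zero_left]

lemma Lmul_smul_left (c : F) (f g : O p m n t F) :
    mul p m n t F (c • f) g = c • mul p m n t F f g := by
  funext b
  show (∑ α : MIdx p m t, ∑ u ∈ b.2.powerset, _) = c * (∑ α : MIdx p m t, ∑ u ∈ b.2.powerset, _)
  rw [Finset.mul_sum]
  refine Finset.sum_congr rfl fun α _ => ?_
  rw [Finset.mul_sum]
  refine Finset.sum_congr rfl fun u _ => ?_
  split_ifs with h
  · show _ * _ * ((c • f) (α, u)) * _ = _
    rw [Pi.smul_apply, smul_eq_mul]; ring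
  · ring

lemma Lmul_smul_right (c : F) (f g : O p m n t F) :
    mul p m n t F f (c • g) = c • mul p m n t F f g := by
  funext b
  show (∑ α : MIdx p m t, ∑ u ∈ b.2.powerset, _) = c * (∑ α : MIdx p m t, ∑ u ∈ b.2.powerset, _)
  rw [Finset.mul_sum]
  refine Finset.sum_congr rfl fun α _ => ?_
  rw [Finset.mul_sum]
  refine Finset.sum_congr rfl fun u _ => ?_
  split_ifs with h
  · show _ * _ * _ * ((c • g) _) = _
    rw [Pi.smul_apply, smul_eq_mul]; ring
  · ring

lemma LpdE_smul (c : F) (s : Fin (2 * m)) (f : O p m n t F) :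
    pdE p m n t F s (c • f) = c • pdE p m n t F s f := by
  funext b
  rw [Pi.smul_apply]
  unfold pdE
  split <;> simp

lemma LpdO_smul (c : F) (k : Fin n) (f : O p m n t F) :
    pdO p m n t F k (c • f) = c • pdO p m n t F k f := by
  funext b
  rw [Pi.smul_apply]
  unfold pdO
  split
  · simp
  · rw [Pi.smul_apply, smul_eq_mul, smul_eq_mul]; ring

lemma Lpd_smul (c : F) (i : Y m n) (f : O p m n t F) :
    pd p m n t F i (c • f) = c • pd p m n t F i f := by
  cases i with
  | inl s => exact LpdE_smul p m n t F c s f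
  | inr k => exact LpdO_smul p m n t F c k f

lemma Lact_smul_right (c : F) (D : W p m n t F) (f : O p m n t F) :
    act p m n t F D (c • f) = c • act p m n t F D f := by
  unfold act
  rw [Finset.smul_sum]
  refine Finset.sum_congr rfl fun i _ => ?_
  rw [Lpd_smul, Lmul_smul_right]

lemma Lsgn_empty_left (v : Finset (Fin n)) : sgn n F ∅ v = 1 := by
  simp [sgn]

lemma Lsgn_empty_right (u : Finset (Fin n)) : sgn n F u ∅ = 1 := by
  simp [sgn]

lemma LpdE_oneO (s : Fin (2 * m)) : pdE p m n t F s (oneO p m n t F) = 0 := by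
  funext b
  show pdE p m n t F s (oneO p m n t F) b = (0 : F)
  unfold pdE; split
  · unfold oneO; split
    · rename_i h
      exfalso
      have h2 := h.1 s
      simp at h2
    · rfl
  · rfl

lemma LpdO_oneO (k : Fin n) : pdO p m n t F k (oneO p m n t F) = 0 := by
  funext b
  show pdO p m n t F k (oneO p m n t F) b = (0 : F)
  unfold pdO; split
  · rfl
  · unfold oneO; split
    · rename_i h
      exact absurd h.2 (Finset.insert_ne_empty _ _)
    · rw [mul_zero]

lemma Lpd_oneO (i : Y m n) : pd p m n t F i (oneO p m n t F) = 0 := by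
  cases i with
  | inl s => exact LpdE_oneO p m n t F s
  | inr k => exact LpdO_oneO p m n t F k

lemma Lact_oneO (D : W p m n t F) : act p m n t F D (oneO p m n t F) = 0 := by
  unfold act
  refine Finset.sum_eq_zero fun i _ => ?_
  rw [Lpd_oneO, Lmul_zero_right]

end Aux

section Aux2

variable (p m n : ℕ) (t : Fin (2 * m) → ℕ) (F : Type) [Field F]

lemma LoneO_supp (x : BIdx p m n t) (h : ¬((∀ i, (x.1 i : ℕ) = 0) ∧ x.2 = ∅)) :
    oneO p m n t F x = 0 := if_neg h

lemma Lmul_oneO_right (f : O p m n t F) : mul p m n t F f (oneO p m n t F) = f := by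
  funext b
  show (∑ α : MIdx p m t, ∑ u ∈ b.2.powerset, _) = f b
  rw [Finset.sum_eq_single b.1, Finset.sum_eq_single b.2]
  · rw [if_pos (fun i => le_refl _)]
    have h1 : oneO p m n t F
        (⟨fun i => (⟨(b.1 i : ℕ) - (b.1 i : ℕ),
          lt_of_le_of_lt (Nat.sub_le _ _) (b.1 i).isLt⟩ : Fin (p ^ t i)), b.2 \ b.2⟩) = 1 := by
      unfold oneO
      rw [if_pos]
      exact ⟨fun i => by simp, by simp⟩
    rw [h1, Finset.sdiff_self, Lsgn_empty_right]
    simp [Nat.choose_self]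
  · intro u hu hne
    split
    · refine mul_eq_zero_of_right _ (LoneO_supp p m n t F _ ?_)
      rintro ⟨-, h2⟩
      simp only at h2
      rw [Finset.sdiff_eq_empty_iff_subset] at h2
      exact hne (le_antisymm (Finset.mem_powerset.mp hu) h2)
    · rfl
  · intro h; exact absurd (Finset.mem_powerset_self _) h
  · intro α hα hne
    refine Finset.sum_eq_zero fun u hu => ?_
    split
    · rename_i hle
      have ⟨i0, hi0⟩ : ∃ i, (α i : ℕ) ≠ (b.1 i : ℕ) := by
        by_contra hc
        push_neg at hc
        exact hne (midx_ext p m t hc)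
      refine mul_eq_zero_of_right _ (LoneO_supp p m n t F _ ?_)
      rintro ⟨h1, -⟩
      have h2 := h1 i0
      simp only at h2
      have h3 := hle i0
      omega
    · rfl
  · intro h; exact absurd (Finset.mem_univ _) h

lemma Lmul_oneO_left (hpt : ∀ k, 0 < p ^ t k) (g : O p m n t F) :
    mul p m n t F (oneO p m n t F) g = g := by
  funext b
  show (∑ α : MIdx p m t, ∑ u ∈ b.2.powerset, _) = g b
  rw [Finset.sum_eq_single (fun k => (⟨0, hpt k⟩ : Fin (p ^ t k)))]
  · rw [Finset.sum_eq_single (∅ : Finset (Fin n))]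
    · rw [if_pos (fun i => Nat.zero_le _)]
      have h1 : oneO p m n t F ((fun k => (⟨0, hpt k⟩ : Fin (p ^ t k))), (∅ : Finset (Fin n))) = 1 := by
        unfold oneO
        rw [if_pos ⟨fun i => rfl, rfl⟩]
      rw [h1, Lsgn_empty_left, Finset.sdiff_empty]
      have h2 : (fun i => (⟨(b.1 i : ℕ) - ((⟨0, hpt i⟩ : Fin (p ^ t i)) : ℕ),
          lt_of_le_of_lt (Nat.sub_le _ _) (b.1 i).isLt⟩ : Fin (p ^ t i))) = b.1 :=
        funext fun i => Fin.ext (Nat.sub_zero _)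
      rw [h2]
      simp
    · intro u hu hne
      split
      · refine mul_eq_zero_of_left (mul_eq_zero_of_right _ (LoneO_supp p m n t F _ ?_)) _
        rintro ⟨-, h2⟩
        exact hne h2
      · rfl
    · intro h; exact absurd (Finset.empty_mem_powerset _) h
  · intro α hα hne
    refine Finset.sum_eq_zero fun u hu => ?_
    split
    · refine mul_eq_zero_of_left (mul_eq_zero_of_right _ (LoneO_supp p m n t F _ ?_)) _
      rintro ⟨h1, -⟩
      exact hne (midx_ext p m t fun k => (h1 k).trans rfl)
    · rfl
  · intro h; exact absurd (Finset.mem_univ _) h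

lemma LxE_apply (β : MIdx p m t) (u : Finset (Fin n)) (b : BIdx p m n t) :
    xE p m n t F β u b = if b = (β, u) then 1 else 0 := rfl

lemma LxE_eq_oneO (β : MIdx p m t) (hβ : ∀ k, (β k : ℕ) = 0) :
    xE p m n t F β ∅ = oneO p m n t F := by
  funext b
  unfold xE oneO
  by_cases hb : b = (β, (∅ : Finset (Fin n)))
  · rw [if_pos hb, if_pos]
    subst hb
    exact ⟨hβ, rfl⟩
  · rw [if_neg hb, if_neg]
    rintro ⟨h1, h2⟩
    refine hb (Prod.ext ?_ h2)
    exact midx_ext p m t fun k => (h1 k).trans (hβ k).symm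

lemma LpdE_xE (s : Fin (2 * m)) (β : MIdx p m t) (u : Finset (Fin n)) :
    pdE p m n t F s (xE p m n t F β u) =
      if (β s : ℕ) = 0 then 0 else xE p m n t F (decE p m t β s) u := by
  funext b
  by_cases h0 : (β s : ℕ) = 0
  · rw [if_pos h0]
    show pdE p m n t F s (xE p m n t F β u) b = (0 : F)
    unfold pdE; split
    · unfold xE; split
      · rename_i hlt h
        exfalso
        have h1 : (Function.update b.1 s ⟨(b.1 s : ℕ) + 1, hlt⟩) s = β s :=
          congrFun (congrArg Prod.fst h) s
        rw [Function.update_self] at h1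
        have h2 : (b.1 s : ℕ) + 1 = (β s : ℕ) := congrArg Fin.val h1
        omega
      · rfl
    · rfl
  · rw [if_neg h0, LxE_apply]
    by_cases hb : b = (decE p m t β s, u)
    · rw [if_pos hb]
      subst hb
      unfold pdE
      have hcond : ((decE p m t β s) s : ℕ) + 1 < p ^ t s := by
        rw [decE_val, if_pos rfl]
        have := (β s).isLt
        omega
      rw [dif_pos hcond]
      unfold xE
      rw [if_pos]
      refine Prod.ext (funext fun k => Fin.ext ?_) rfl
      show (Function.update (decE p m t β s) s
        (⟨((decE p m t β s) s : ℕ) + 1, hcond⟩ : Fin (p ^ t s)) k : ℕ) = (β k : ℕ)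
      by_cases hk : k = s
      · rw [hk, Function.update_self]
        show ((decE p m t β s) s : ℕ) + 1 = (β s : ℕ)
        rw [decE_val, if_pos rfl]
        omega
      · rw [Function.update_of_ne hk]
        show ((decE p m t β s) k : ℕ) = (β k : ℕ)
        rw [decE_val, if_neg hk]
    · rw [if_neg hb]
      show pdE p m n t F s (xE p m n t F β u) b = (0 : F)
      unfold pdE; split
      · unfold xE; split
        · rename_i hlt h
          exfalso
          refine hb ?_
          have hfst : Function.update b.1 s ⟨(b.1 s : ℕ) + 1, hlt⟩ = β :=
            congrArg Prod.fst h
          have hsnd : b.2 = u := congrArg Prod.snd h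
          refine Prod.ext (funext fun k => Fin.ext ?_) hsnd
          rw [decE_val]
          by_cases hk : k = s
          · subst hk
            have h1 := congrFun hfst k
            rw [Function.update_self] at h1
            have h2 : (b.1 k : ℕ) + 1 = (β k : ℕ) := congrArg Fin.val h1
            rw [if_pos rfl]
            omega
          · have h1 := congrFun hfst k
            rw [Function.update_of_ne hk] at h1
            rw [if_neg hk]
            exact congrArg Fin.val h1
        · rfl
      · rfl

lemma LpdO_xE_empty (k : Fin n) (β : MIdx p m t) :
    pdO p m n t F k (xE p m n t F β ∅) = 0 := by
  funext b
  show pdO p m n t F k (xE p m n t F β ∅) b = (0 : F)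
  unfold pdO; split
  · rfl
  · unfold xE; split
    · rename_i h
      exact absurd (congrArg Prod.snd h) (Finset.insert_ne_empty _ _)
    · rw [mul_zero]

lemma LevenO_xE_empty (β : MIdx p m t) :
    evenO p m n t F (xE p m n t F β ∅) = xE p m n t F β ∅ := by
  funext b
  unfold evenO
  split
  · rfl
  · rename_i h
    rw [LxE_apply, if_neg]
    rintro rfl
    simp at h

lemma LoddO_xE_empty (β : MIdx p m t) :
    oddO p m n t F (xE p m n t F β ∅) = 0 := by
  funext b
  show oddO p m n t F (xE p m n t F β ∅) b = (0 : F)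
  unfold oddO
  split
  · rename_i h
    rw [LxE_apply, if_neg]
    rintro rfl
    simp at h
  · rfl

lemma LoddO_zero : oddO p m n t F 0 = 0 := by
  funext b
  show oddO p m n t F 0 b = (0 : F)
  unfold oddO; split <;> rfl

lemma LevenO_zero : evenO p m n t F 0 = 0 := by
  funext b
  show evenO p m n t F 0 b = (0 : F)
  unfold evenO; split <;> rfl

lemma LoddO_smul (c : F) (f : O p m n t F) :
    oddO p m n t F (c • f) = c • oddO p m n t F f := by
  funext b
  rw [Pi.smul_apply]
  unfold oddO
  split <;> simp

end Aux2

section Aux3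

variable (p m n : ℕ) (t : Fin (2 * m) → ℕ) (F : Type) [Field F]

lemma LprimeE_prime (r : Fin (2 * m)) : primeE m (primeE m r) = r := by
  unfold primeE
  by_cases h : (r : ℕ) < m
  · rw [dif_pos h]
    have h2 : ¬((⟨(r : ℕ) + m, by omega⟩ : Fin (2 * m)) : ℕ) < m := by simp
    rw [dif_neg h2]
    exact Fin.ext (by simp)
  · rw [dif_neg h]
    have hr := r.isLt
    have h2 : ((⟨(r : ℕ) - m, by omega⟩ : Fin (2 * m)) : ℕ) < m := by simp; omega
    rw [dif_pos h2]
    exact Fin.ext (by simp; omega)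

lemma LprimeE_eq_iff (s w : Fin (2 * m)) : primeE m s = w ↔ s = primeE m w := by
  constructor
  · rintro rfl; exact (LprimeE_prime m s).symm
  · rintro rfl; exact LprimeE_prime m w

lemma LtauF_sq (r : Fin (2 * m)) : tauF m F r * tauF m F r = 1 := by
  unfold tauF; split <;> simp

lemma LtauF_prime (r : Fin (2 * m)) : tauF m F (primeE m r) = - tauF m F r := by
  unfold tauF primeE
  by_cases h : (r : ℕ) < m
  · rw [dif_pos h, if_pos h, if_neg (by simp)]
  · have hr := r.isLt
    rw [dif_neg h, if_neg h, if_pos (by simp; omega)]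
    simp

lemma LtauF_ne_zero (r : Fin (2 * m)) : tauF m F r ≠ 0 := by
  unfold tauF; split <;> simp

lemma LDH_xE_inl (β : MIdx p m t) (s : Fin (2 * m)) :
    DH p m n t F (xE p m n t F β ∅) (Sum.inl s) =
      tauF m F (primeE m s) • pdE p m n t F (primeE m s) (xE p m n t F β ∅) := by
  show tauF m F (primeE m s) • (pdE p m n t F (primeE m s) (evenO p m n t F (xE p m n t F β ∅))
    + pdE p m n t F (primeE m s) (oddO p m n t F (xE p m n t F β ∅))) = _
  rw [LevenO_xE_empty, LoddO_xE_empty, LpdE_zero, add_zero]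

lemma LDH_xE_inr (β : MIdx p m t) (k : Fin n) :
    DH p m n t F (xE p m n t F β ∅) (Sum.inr k) = 0 := by
  show pdO p m n t F k (evenO p m n t F (xE p m n t F β ∅))
    - pdO p m n t F k (oddO p m n t F (xE p m n t F β ∅)) = 0
  rw [LevenO_xE_empty, LoddO_xE_empty, LpdO_zero, LpdO_xE_empty, sub_zero]

lemma LoddW_DH_xE (β : MIdx p m t) :
    oddW p m n t F (DH p m n t F (xE p m n t F β ∅)) = 0 := by
  funext jj
  cases jj with
  | inl s =>
    show oddO p m n t F (DH p m n t F (xE p m n t F β ∅) (Sum.inl s)) = 0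
    rw [LDH_xE_inl, LoddO_smul, LpdE_xE]
    split
    · rw [LoddO_zero, smul_zero]
    · rw [LoddO_xE_empty, smul_zero]
  | inr k =>
    show evenO p m n t F (DH p m n t F (xE p m n t F β ∅) (Sum.inr k)) = 0
    rw [LDH_xE_inr, LevenO_zero]

lemma LoddW_zero : oddW p m n t F 0 = 0 := by
  funext jj
  cases jj with
  | inl s => exact LoddO_zero p m n t F
  | inr k => exact LevenO_zero p m n t F

lemma Lbra_zero_right (D : W p m n t F) : bra p m n t F D 0 = 0 := by
  funext jj
  show act p m n t F D 0 - act p m n t F 0 (D jj)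
    + act p m n t F (oddW p m n t F 0) (oddW p m n t F D jj)
    + act p m n t F (oddW p m n t F 0) (oddW p m n t F D jj) = 0
  rw [Lact_zero_right, Lact_zero_left, LoddW_zero, Lact_zero_left]
  simp

lemma LdelW_inl (r s : Fin (2 * m)) :
    delW p m n t F r (Sum.inl s) = if s = r then oneO p m n t F else 0 := by
  show (if Sum.inl s = (Sum.inl r : Y m n) then oneO p m n t F else 0) = _
  by_cases h : s = r
  · rw [if_pos h, if_pos (by rw [h])]
  · rw [if_neg h, if_neg (by simpa using h)]

lemma LdelW_inr (r : Fin (2 * m)) (k : Fin n) :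
    delW p m n t F r (Sum.inr k) = 0 := by
  show (if Sum.inr k = (Sum.inl r : Y m n) then oneO p m n t F else 0) = _
  rw [if_neg (by simp)]

lemma LoddW_delW (r : Fin (2 * m)) : oddW p m n t F (delW p m n t F r) = 0 := by
  funext jj
  cases jj with
  | inl s =>
    show oddO p m n t F (delW p m n t F r (Sum.inl s)) = 0
    rw [LdelW_inl]
    by_cases h : s = r
    · rw [if_pos h]
      funext b
      show oddO p m n t F (oneO p m n t F) b = (0 : F)
      unfold oddO; split
      · rename_i hodd
        refine LoneO_supp p m n t F b ?_
        rintro ⟨-, h2⟩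
        rw [h2] at hodd
        simp at hodd
      · rfl
    · rw [if_neg h, LoddO_zero]
  | inr k =>
    show evenO p m n t F (delW p m n t F r (Sum.inr k)) = 0
    rw [LdelW_inr, LevenO_zero]

lemma Lact_delW_left (hpt : ∀ k, 0 < p ^ t k) (r : Fin (2 * m)) (f : O p m n t F) :
    act p m n t F (delW p m n t F r) f = pdE p m n t F r f := by
  unfold act
  rw [Finset.sum_eq_single (Sum.inl r : Y m n)]
  · rw [LdelW_inl, if_pos rfl]
    show mul p m n t F (oneO p m n t F) (pdE p m n t F r f) = _
    rw [Lmul_oneO_left p m n t F hpt]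
  · intro ii _ hne
    cases ii with
    | inl s =>
      rw [LdelW_inl, if_neg (by rintro rfl; exact hne rfl), Lmul_zero_left]
    | inr k =>
      rw [LdelW_inr, Lmul_zero_left]
  · intro h; exact absurd (Finset.mem_univ _) h

lemma Lbra_delW (hpt : ∀ k, 0 < p ^ t k) (r : Fin (2 * m)) (E : W p m n t F) :
    bra p m n t F (delW p m n t F r) E = fun jj => pdE p m n t F r (E jj) := by
  funext jj
  show act p m n t F (delW p m n t F r) (E jj) - act p m n t F E (delW p m n t F r jj)
    + act p m n t F (oddW p m n t F E) (oddW p m n t F (delW p m n t F r) jj)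
    + act p m n t F (oddW p m n t F E) (oddW p m n t F (delW p m n t F r) jj) = _
  rw [LoddW_delW]
  have h2 : act p m n t F E (delW p m n t F r jj) = 0 := by
    cases jj with
    | inl s =>
      rw [LdelW_inl]
      by_cases h : s = r
      · rw [if_pos h, Lact_oneO]
      · rw [if_neg h, Lact_zero_right]
    | inr k => rw [LdelW_inr, Lact_zero_right]
  rw [h2, Lact_delW_left p m n t F hpt]
  show _ - 0 + act p m n t F _ ((0 : W p m n t F) jj) + act p m n t F _ ((0 : W p m n t F) jj) = _
  have h3 : ((0 : W p m n t F) jj) = (0 : O p m n t F) := rfl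
  rw [sub_zero, h3, Lact_zero_right, add_zero, add_zero]

end Aux3

section Aux4

variable (p m n : ℕ) (t : Fin (2 * m) → ℕ) (F : Type) [Field F]

lemma Lsum_decE (β : MIdx p m t) (s : Fin (2 * m)) (h : (β s : ℕ) ≠ 0) :
    ∑ k, ((decE p m t β s) k : ℕ) = (∑ k, (β k : ℕ)) - 1 := by
  have h1 : ∑ k ∈ Finset.univ.erase s, ((decE p m t β s) k : ℕ)
      = ∑ k ∈ Finset.univ.erase s, (β k : ℕ) := by
    refine Finset.sum_congr rfl fun k hk => ?_
    rw [decE_val, if_neg (Finset.ne_of_mem_erase hk)]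
  have h2 : ∑ k, ((decE p m t β s) k : ℕ)
      = (∑ k ∈ Finset.univ.erase s, (β k : ℕ)) + ((β s : ℕ) - 1) := by
    rw [← Finset.sum_erase_add _ _ (Finset.mem_univ s), h1, decE_val, if_pos rfl]
  have h3 : ∑ k, (β k : ℕ) = (∑ k ∈ Finset.univ.erase s, (β k : ℕ)) + (β s : ℕ) :=
    (Finset.sum_erase_add _ _ (Finset.mem_univ s)).symm
  omega

lemma LDH_supp (β : MIdx p m t) (jj : Y m n) (b : BIdx p m n t)
    (h : DH p m n t F (xE p m n t F β ∅) jj b ≠ 0) :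
    degB p m n t b + 1 = ∑ k, (β k : ℕ) := by
  cases jj with
  | inr k =>
    rw [LDH_xE_inr] at h
    exact absurd rfl h
  | inl s =>
    rw [LDH_xE_inl, Pi.smul_apply, LpdE_xE] at h
    split at h
    · simp at h
    · rename_i hq
      rw [smul_eq_mul, LxE_apply] at h
      split at h
      · rename_i hb
        subst hb
        unfold degB
        simp only [Finset.card_empty, add_zero]
        rw [Lsum_decE p m t β _ hq]
        have h3 : (β (primeE m s) : ℕ) ≤ ∑ k, (β k : ℕ) :=
          Finset.single_le_sum (f := fun k => (β k : ℕ))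
            (fun k _ => Nat.zero_le _) (Finset.mem_univ (primeE m s))
        omega
      · simp at h

lemma LinDeg_DH (β : MIdx p m t) (v : ℕ) (hv : ∑ k, (β k : ℕ) = v) :
    inDeg p m n t F ((v : ℤ) - 2) (DH p m n t F (xE p m n t F β ∅)) := by
  intro jj b hb
  by_contra h
  have h1 := LDH_supp p m n t F β jj b h
  rw [hv] at h1
  apply hb
  have : (degB p m n t b : ℤ) + 1 = (v : ℤ) := by exact_mod_cast h1
  omega

lemma LDH_supp2 (β : MIdx p m t) (jj : Y m n) (b : BIdx p m n t) (hb : b.2 ≠ ∅) :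
    DH p m n t F (xE p m n t F β ∅) jj b = 0 := by
  by_contra h
  cases jj with
  | inr k => rw [LDH_xE_inr] at h; exact h rfl
  | inl s =>
    rw [LDH_xE_inl, Pi.smul_apply, LpdE_xE] at h
    split at h
    · simp at h
    · rw [smul_eq_mul, LxE_apply] at h
      split at h
      · rename_i hbb
        exact hb (congrArg Prod.snd hbb)
      · simp at h

lemma LDH_mem (hm : 0 < m) (hbig : ∀ k, 2 < p ^ t k - 1) (β : MIdx p m t)
    (hβ : ∀ k, (β k : ℕ) ≤ 2) :
    DH p m n t F (xE p m n t F β ∅) ∈ frakN p m n t F := by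
  refine Submodule.subset_span ⟨β, ∅, by simp, ?_, ?_, rfl⟩
  · rintro ⟨hpi, -⟩
    have h1 := hpi ⟨0, by omega⟩
    have h2 := hβ ⟨0, by omega⟩
    have h3 := hbig ⟨0, by omega⟩
    omega
  · rintro ⟨hpi, -⟩
    have h1 := hpi ⟨0, by omega⟩
    have h2 := hβ ⟨0, by omega⟩
    have h3 := hbig ⟨0, by omega⟩
    omega

lemma LdelW_eq (r : Fin (2 * m)) (β : MIdx p m t)
    (hβ : ∀ k, (β k : ℕ) = if k = primeE m r then 1 else 0) :
    delW p m n t F r = tauF m F (primeE m r) • DH p m n t F (xE p m n t F β ∅) := by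
  funext jj
  rw [Pi.smul_apply]
  cases jj with
  | inr k => rw [LdelW_inr, LDH_xE_inr, smul_zero]
  | inl s =>
    rw [LdelW_inl, LDH_xE_inl, LpdE_xE]
    by_cases h : s = r
    · subst h
      rw [if_pos rfl, if_neg (by rw [hβ, if_pos rfl]; omega)]
      have h2 : xE p m n t F (decE p m t β (primeE m s)) ∅ = oneO p m n t F := by
        refine LxE_eq_oneO p m n t F _ fun k => ?_
        rw [decE_val]
        by_cases hk : k = primeE m s
        · rw [if_pos hk, hβ, if_pos rfl]
        · rw [if_neg hk, hβ, if_neg hk]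
      rw [h2, smul_smul, LtauF_sq, one_smul]
    · rw [if_neg h, if_pos, smul_zero, smul_zero]
      rw [hβ, if_neg]
      intro hc
      exact h (by rw [LprimeE_eq_iff] at hc; rwa [LprimeE_prime] at hc)

lemma LinDeg_delW (r : Fin (2 * m)) : inDeg p m n t F (-1) (delW p m n t F r) := by
  intro jj b hb
  cases jj with
  | inr k => rw [LdelW_inr]; rfl
  | inl s =>
    rw [LdelW_inl]
    by_cases h : s = r
    · rw [if_pos h]
      refine LoneO_supp p m n t F b ?_
      rintro ⟨h1, h2⟩
      apply hb
      unfold degB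
      rw [h2, Finset.card_empty, Finset.sum_eq_zero (fun k _ => h1 k)]
      rfl
    · rw [if_neg h]; rfl

/-- The key structural fact about images of φ on degree-zero generators. -/
lemma Lshape (d : ℤ) (hde : Even d) (E : W p m n t F)
    (hW : E ∈ calW p m n t F) (hdeg : inDeg p m n t F d E)
    (hker : ∀ (r : Fin (2 * m)) (jj : Y m n), pdE p m n t F r (E jj) = 0) :
    (∀ s, E (Sum.inl s) = 0) ∧
    (∀ (jj : Y m n) (b : BIdx p m n t), (∃ r, (b.1 r : ℕ) ≠ 0) → E jj b = 0) := by
  have h2 : ∀ (jj : Y m n) (b : BIdx p m n t), (∃ r, (b.1 r : ℕ) ≠ 0) → E jj b = 0 := by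
    rintro jj b ⟨r, hr⟩
    have hlt : ((b.1 r : ℕ) - 1) < p ^ t r := lt_of_le_of_lt (Nat.sub_le _ _) (b.1 r).isLt
    have hkey : pdE p m n t F r (E jj)
        ((Function.update b.1 r (⟨(b.1 r : ℕ) - 1, hlt⟩ : Fin (p ^ t r)), b.2) : BIdx p m n t)
        = (0 : F) := congrFun (hker r jj) _
    unfold pdE at hkey
    split at hkey
    · rename_i hc
      have hX : Function.update (Function.update b.1 r (⟨(b.1 r : ℕ) - 1, hlt⟩ : Fin (p ^ t r))) r
          (⟨((Function.update b.1 r (⟨(b.1 r : ℕ) - 1, hlt⟩ : Fin (p ^ t r))) r : ℕ) + 1, hc⟩ : Fin (p ^ t r))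
          = b.1 := by
        rw [Function.update_idem]
        have hv : (⟨((Function.update b.1 r (⟨(b.1 r : ℕ) - 1, hlt⟩ : Fin (p ^ t r))) r : ℕ) + 1, hc⟩ : Fin (p ^ t r))
            = b.1 r := by
          refine Fin.ext ?_
          show ((Function.update b.1 r (⟨(b.1 r : ℕ) - 1, hlt⟩ : Fin (p ^ t r))) r : ℕ) + 1 = (b.1 r : ℕ)
          rw [Function.update_self]
          show (b.1 r : ℕ) - 1 + 1 = _
          omega
        rw [hv, Function.update_eq_self]
      have hkey2 : E jj (Function.update (Function.update b.1 r (⟨(b.1 r : ℕ) - 1, hlt⟩ : Fin (p ^ t r))) r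
          (⟨((Function.update b.1 r (⟨(b.1 r : ℕ) - 1, hlt⟩ : Fin (p ^ t r))) r : ℕ) + 1, hc⟩ : Fin (p ^ t r)), b.2)
          = (0 : F) := hkey
      rw [hX] at hkey2
      exact hkey2
    · rename_i hc
      exfalso
      apply hc
      show ((Function.update b.1 r (⟨(b.1 r : ℕ) - 1, hlt⟩ : Fin (p ^ t r))) r : ℕ) + 1 < p ^ t r
      rw [Function.update_self]
      show (b.1 r : ℕ) - 1 + 1 < p ^ t r
      have := (b.1 r).isLt
      omega
  refine ⟨fun s => funext fun b => ?_, h2⟩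
  by_cases hb : ∃ r, (b.1 r : ℕ) ≠ 0
  · exact (h2 _ b hb).trans rfl
  · push_neg at hb
    have hdb : degB p m n t b = b.2.card := by
      unfold degB
      rw [Finset.sum_eq_zero (fun k _ => hb k), zero_add]
    show E (Sum.inl s) b = (0 : F)
    by_cases hc : (b.2.card + 0) % 2 = 0
    · refine hdeg (Sum.inl s) b ?_
      obtain ⟨e, he⟩ := hde
      rw [hdb]
      intro hcontra
      omega
    · exact hW (Sum.inl s) b hc

/-- Brackets of purely-even linear vector fields against odd-coefficient fields vanish. -/
lemma Lbra_vanish (D E : W p m n t F)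
    (hD1 : ∀ k, D (Sum.inr k) = 0)
    (hD2 : ∀ s b, b.2 ≠ ∅ → D (Sum.inl s) b = 0)
    (hE1 : ∀ s, E (Sum.inl s) = 0)
    (hE2 : ∀ (jj : Y m n) (b : BIdx p m n t), (∃ r, (b.1 r : ℕ) ≠ 0) → E jj b = 0) :
    bra p m n t F D E = 0 := by
  have hoddD : oddW p m n t F D = 0 := by
    funext ii
    cases ii with
    | inl s =>
      show oddO p m n t F (D (Sum.inl s)) = 0
      funext b
      show oddO p m n t F (D (Sum.inl s)) b = (0 : F)
      unfold oddO
      split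
      · rename_i hodd
        refine hD2 s b ?_
        intro hc
        rw [hc] at hodd
        simp at hodd
      · rfl
    | inr k =>
      show evenO p m n t F (D (Sum.inr k)) = 0
      rw [hD1, LevenO_zero]
  funext jj
  show act p m n t F D (E jj) - act p m n t F E (D jj)
    + act p m n t F (oddW p m n t F E) (oddW p m n t F D jj)
    + act p m n t F (oddW p m n t F E) (oddW p m n t F D jj) = 0
  have h1 : act p m n t F D (E jj) = 0 := by
    unfold act
    refine Finset.sum_eq_zero fun ii _ => ?_
    cases ii with
    | inr k => rw [hD1, Lmul_zero_left]
    | inl r =>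
      have hpd : pd p m n t F (Sum.inl r) (E jj) = 0 := by
        show pdE p m n t F r (E jj) = 0
        funext b
        show pdE p m n t F r (E jj) b = (0 : F)
        unfold pdE
        split
        · refine hE2 jj _ ⟨r, ?_⟩
          show ((Function.update b.1 r _ : MIdx p m t) r : ℕ) ≠ 0
          rw [Function.update_self]
          simp
        · rfl
      rw [hpd, Lmul_zero_right]
  have h2 : act p m n t F E (D jj) = 0 := by
    unfold act
    refine Finset.sum_eq_zero fun ii _ => ?_
    cases ii with
    | inl s => rw [hE1, Lmul_zero_left]
    | inr k =>
      have hpd : pd p m n t F (Sum.inr k) (D jj) = 0 := by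
        show pdO p m n t F k (D jj) = 0
        funext b
        show pdO p m n t F k (D jj) b = (0 : F)
        unfold pdO
        split
        · rfl
        · cases jj with
          | inl s =>
            rw [hD2 s _ (by show insert k b.2 ≠ ∅; exact Finset.insert_ne_empty _ _), mul_zero]
          | inr k2 =>
            rw [hD1]
            show _ * (0 : O p m n t F) _ = (0:F)
            simp
      rw [hpd, Lmul_zero_right]
  rw [h1, h2, hoddD]
  have h3 : ((0 : W p m n t F) jj) = (0 : O p m n t F) := rfl
  rw [h3, Lact_zero_right]
  simp

end Aux4

section Aux5

variable (p m n : ℕ) (t : Fin (2 * m) → ℕ) (F : Type) [Field F]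

lemma LprimeE_ne (j : Fin (2 * m)) : primeE m j ≠ j := by
  have hj := j.isLt
  have hm : 0 < m := by omega
  unfold primeE
  by_cases h : (j : ℕ) < m
  · rw [dif_pos h]
    intro hc
    have := congrArg Fin.val hc
    simp at this
    omega
  · rw [dif_neg h]
    intro hc
    have := congrArg Fin.val hc
    simp at this
    omega

lemma Lact_DH_xE (δ : MIdx p m t) (w : Fin (2 * m)) (hδ : ∀ k, k ≠ w → (δ k : ℕ) = 0)
    (f : O p m n t F) :
    act p m n t F (DH p m n t F (xE p m n t F δ ∅)) f
      = mul p m n t F (DH p m n t F (xE p m n t F δ ∅) (Sum.inl (primeE m w)))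
          (pdE p m n t F (primeE m w) f) := by
  unfold act
  rw [Finset.sum_eq_single (Sum.inl (primeE m w) : Y m n)]
  · rfl
  · intro ii _ hne
    cases ii with
    | inr k => rw [LDH_xE_inr, Lmul_zero_left]
    | inl s =>
      have hs : primeE m s ≠ w := fun hc => hne (congrArg Sum.inl ((LprimeE_eq_iff m s w).mp hc))
      rw [LDH_xE_inl, LpdE_xE, if_pos (hδ _ hs), smul_zero, Lmul_zero_left]
  · intro h; exact absurd (Finset.mem_univ _) h

lemma Lact_xE_single (D : W p m n t F) (w : Fin (2 * m)) (δ : MIdx p m t)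
    (hδ : ∀ k, (δ k : ℕ) = if k = w then 1 else 0) :
    act p m n t F D (xE p m n t F δ ∅) = D (Sum.inl w) := by
  unfold act
  rw [Finset.sum_eq_single (Sum.inl w : Y m n)]
  · show mul p m n t F (D (Sum.inl w)) (pdE p m n t F w (xE p m n t F δ ∅)) = _
    rw [LpdE_xE, if_neg (show ¬(δ w : ℕ) = 0 by rw [hδ, if_pos rfl]; omega)]
    have h1 : xE p m n t F (decE p m t δ w) ∅ = oneO p m n t F := by
      refine LxE_eq_oneO p m n t F _ fun k => ?_
      rw [decE_val]
      by_cases hk : k = w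
      · rw [if_pos hk, hδ, if_pos rfl]
      · rw [if_neg hk, hδ, if_neg hk]
    rw [h1, Lmul_oneO_right]
  · intro ii _ hne
    cases ii with
    | inr k =>
      show mul p m n t F (D (Sum.inr k)) (pdO p m n t F k (xE p m n t F δ ∅)) = 0
      rw [LpdO_xE_empty, Lmul_zero_right]
    | inl s =>
      show mul p m n t F (D (Sum.inl s)) (pdE p m n t F s (xE p m n t F δ ∅)) = 0
      have hs : s ≠ w := fun hc => hne (congrArg Sum.inl hc)
      rw [LpdE_xE, if_pos (by rw [hδ, if_neg hs]), Lmul_zero_right]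
  · intro h; exact absurd (Finset.mem_univ _) h

lemma Lbra_delW_DH (hpt : ∀ k, 0 < p ^ t k) (r : Fin (2 * m)) (β : MIdx p m t) :
    bra p m n t F (delW p m n t F r) (DH p m n t F (xE p m n t F β ∅))
      = if (β r : ℕ) = 0 then 0 else DH p m n t F (xE p m n t F (decE p m t β r) ∅) := by
  rw [Lbra_delW p m n t F hpt]
  funext jj
  by_cases h0 : (β r : ℕ) = 0
  · rw [if_pos h0]
    cases jj with
    | inr k => rw [LDH_xE_inr, LpdE_zero]; rfl
    | inl s =>
      rw [LDH_xE_inl, LpdE_xE, LpdE_smul]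
      by_cases hq : (β (primeE m s) : ℕ) = 0
      · rw [if_pos hq, LpdE_zero, smul_zero]; rfl
      · have hrq : ¬ r = primeE m s := fun hc => hq (hc ▸ h0)
        rw [if_neg hq, LpdE_xE, if_pos (by rw [decE_val, if_neg hrq]; exact h0), smul_zero]
        rfl
  · rw [if_neg h0]
    cases jj with
    | inr k => rw [LDH_xE_inr, LpdE_zero, LDH_xE_inr]
    | inl s =>
      rw [LDH_xE_inl, LDH_xE_inl, LpdE_smul, LpdE_xE, LpdE_xE]
      by_cases hq : (β (primeE m s) : ℕ) = 0
      · have hqr : ¬ primeE m s = r := fun hc => h0 (hc ▸ hq)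
        rw [if_pos hq, if_pos (by rw [decE_val, if_neg hqr]; exact hq), LpdE_zero]
      · by_cases hqr : primeE m s = r
        · rw [if_neg hq, LpdE_xE, hqr]
        · rw [if_neg hq, LpdE_xE,
            if_neg (show ¬((decE p m t β (primeE m s)) r : ℕ) = 0 by
              rw [decE_val, if_neg (fun hc => hqr hc.symm)]; exact h0),
            if_neg (show ¬((decE p m t β r) (primeE m s) : ℕ) = 0 by
              rw [decE_val, if_neg hqr]; exact hq)]
          have hmid : decE p m t (decE p m t β (primeE m s)) r
              = decE p m t (decE p m t β r) (primeE m s) := by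
            refine midx_ext p m t fun k => ?_
            simp only [decE_val]
            split_ifs <;> first | rfl | omega | simp_all
          rw [hmid]

end Aux5

section Aux6

variable (p m n : ℕ) (t : Fin (2 * m) → ℕ) (F : Type) [Field F]

/-- The key bracket identity:
`[D_H(x^(2ε_j)), D_H(x^(ε_i+ε_{j'}))] = (1+δ_{ij}) τ(j) D_H(x^(ε_i+ε_j))`. -/
lemma Lkey_bra (hpt : ∀ k, 0 < p ^ t k) (i j : Fin (2 * m)) (α β γ : MIdx p m t)
    (hα : ∀ k, (α k : ℕ) = (if k = i then 1 else 0) + (if k = j then 1 else 0))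
    (hβ : ∀ k, (β k : ℕ) = (if k = i then 1 else 0) + (if k = primeE m j then 1 else 0))
    (hγ : ∀ k, (γ k : ℕ) = (if k = j then 1 else 0) + (if k = j then 1 else 0)) :
    bra p m n t F (DH p m n t F (xE p m n t F γ ∅)) (DH p m n t F (xE p m n t F β ∅))
      = ((if i = j then 2 else 1) * tauF m F j) • DH p m n t F (xE p m n t F α ∅) := by
  have hosc : oddW p m n t F (DH p m n t F (xE p m n t F γ ∅)) = 0 := LoddW_DH_xE p m n t F γ
  have hpjj : primeE m j ≠ j := LprimeE_ne m j
  funext jj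
  rw [Pi.smul_apply]
  cases jj with
  | inr k =>
    simp only [bra]
    rw [LDH_xE_inr p m n t F β k, LDH_xE_inr p m n t F γ k, Lact_zero_right, Lact_zero_right,
      hosc]
    have h3 : ((0 : W p m n t F) (Sum.inr k)) = (0 : O p m n t F) := rfl
    rw [h3, Lact_zero_right, LDH_xE_inr p m n t F α k, smul_zero]
    simp
  | inl s =>
    simp only [bra]
    rw [hosc]
    have h3 : ((0 : W p m n t F) (Sum.inl s)) = (0 : O p m n t F) := rfl
    rw [h3, Lact_zero_right, add_zero, add_zero,
      LDH_xE_inl p m n t F β s, LDH_xE_inl p m n t F γ s, LDH_xE_inl p m n t F α s,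
      Lact_smul_right, Lact_smul_right,
      Lact_DH_xE p m n t F γ j (fun k hk => by rw [hγ, if_neg hk]),
      LDH_xE_inl p m n t F γ (primeE m j), LprimeE_prime,
      LpdE_xE p m n t F j γ,
      if_neg (show ¬(γ j : ℕ) = 0 by rw [hγ]; simp),
      Lmul_smul_left,
      LpdE_xE p m n t F (primeE m s) β,
      LpdE_xE p m n t F (primeE m s) γ,
      LpdE_xE p m n t F (primeE m s) α]
    -- goal now:
    -- τ(q) • (τ(j) • mul (xE (decE γ j) ∅) (pdE (primeE j) (if (β q)=0 then 0 else xE (decE β q) ∅)))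
    --   - τ(q) • act (DH (xE β ∅)) (if (γ q)=0 then 0 else xE (decE γ q) ∅)
    --   = c • (τ(q) • (if (α q)=0 then 0 else xE (decE α q) ∅))
    have H1 : mul p m n t F (xE p m n t F (decE p m t γ j) ∅)
        (pdE p m n t F (primeE m j)
          (if (β (primeE m s) : ℕ) = 0 then 0 else xE p m n t F (decE p m t β (primeE m s)) ∅))
        = if primeE m s = i then xE p m n t F (decE p m t γ j) ∅ else 0 := by
      by_cases hqi : primeE m s = i
      · rw [if_pos hqi, if_neg (show ¬(β (primeE m s) : ℕ) = 0 by rw [hqi, hβ]; simp), LpdE_xE]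
        have hd : ¬((decE p m t β (primeE m s)) (primeE m j) : ℕ) = 0 := by
          rw [hqi]
          simp only [decE_val, hβ]
          all_goals (split_ifs <;> first | trivial | omega | (simp only [Fin.ext_iff] at *; omega))
        rw [if_neg hd]
        have hone : xE p m n t F
            (decE p m t (decE p m t β (primeE m s)) (primeE m j)) ∅ = oneO p m n t F := by
          refine LxE_eq_oneO p m n t F _ fun k => ?_
          rw [hqi]
          simp only [decE_val, hβ]
          all_goals (split_ifs <;> first | trivial | omega | (simp only [Fin.ext_iff] at *; omega))
        rw [hone, Lmul_oneO_right]
      · rw [if_neg hqi]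
        by_cases hβq : (β (primeE m s) : ℕ) = 0
        · rw [if_pos hβq, LpdE_zero, Lmul_zero_right]
        · have hqpj : primeE m s = primeE m j := by
            by_cases hc : primeE m s = primeE m j
            · exact hc
            · have hv := hβ (primeE m s)
              rw [if_neg hqi, if_neg hc] at hv
              omega
          rw [if_neg hβq, LpdE_xE, if_pos, Lmul_zero_right]
          rw [decE_val, if_pos hqpj.symm, hβ, if_neg hqi, if_pos hqpj]
    have H2 : act p m n t F (DH p m n t F (xE p m n t F β ∅))
        (if (γ (primeE m s) : ℕ) = 0 then 0 else xE p m n t F (decE p m t γ (primeE m s)) ∅)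
        = if primeE m s = j then
            tauF m F (primeE m j) • xE p m n t F (decE p m t β (primeE m j)) ∅ else 0 := by
      by_cases hqj : primeE m s = j
      · rw [if_pos hqj, if_neg (show ¬(γ (primeE m s) : ℕ) = 0 by rw [hqj, hγ]; simp)]
        rw [Lact_xE_single p m n t F _ j _ (fun k => by
          rw [hqj]
          simp only [decE_val, hγ]
          all_goals (split_ifs <;> first | trivial | omega | (simp only [Fin.ext_iff] at *; omega)))]
        rw [LDH_xE_inl p m n t F β j, LpdE_xE,
          if_neg (show ¬(β (primeE m j) : ℕ) = 0 by rw [hβ]; simp)]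
      · rw [if_neg hqj, if_pos (show (γ (primeE m s) : ℕ) = 0 by
          rw [hγ, if_neg hqj]), Lact_zero_right]
    rw [H1, H2]
    by_cases hqi : primeE m s = i
    · by_cases hqj : primeE m s = j
      · -- i = j case
        have hij : i = j := hqi.symm.trans hqj
        subst hij
        rw [if_pos hqi, if_pos hqi, if_pos rfl,
          if_neg (show ¬(α (primeE m s) : ℕ) = 0 by rw [hqi, hα]; simp)]
        have hXB : decE p m t β (primeE m i) = decE p m t γ i := by
          refine midx_ext p m t fun k => ?_
          simp only [decE_val, hβ, hγ]
          all_goals (split_ifs <;> first | trivial | omega | (simp only [Fin.ext_iff] at *; omega))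
        have hXC : decE p m t α (primeE m s) = decE p m t γ i := by
          refine midx_ext p m t fun k => ?_
          rw [hqi]
          simp only [decE_val, hα, hγ]
          all_goals (split_ifs <;> first | trivial | omega | (simp only [Fin.ext_iff] at *; omega))
        rw [hXB, hXC, hqi, smul_smul, smul_smul, smul_smul, ← sub_smul]
        congr 1
        rw [LtauF_prime]
        ring
      · -- q = i, i ≠ j
        have hij : ¬ i = j := fun hc => hqj (hqi.trans hc)
        rw [if_pos hqi, if_neg hqj, if_neg hij,
          if_neg (show ¬(α (primeE m s) : ℕ) = 0 by rw [hqi, hα]; simp)]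
        have hXC : decE p m t α (primeE m s) = decE p m t γ j := by
          refine midx_ext p m t fun k => ?_
          rw [hqi]
          simp only [decE_val, hα, hγ]
          all_goals (split_ifs <;> first | trivial | omega | (simp only [Fin.ext_iff] at *; omega))
        rw [hXC, hqi, smul_zero, sub_zero, smul_smul, smul_smul]
        congr 1
        ring
    · by_cases hqj : primeE m s = j
      · -- q = j, i ≠ j
        have hij : ¬ i = j := fun hc => hqi (hqj ▸ hc.symm ▸ rfl)
        rw [if_neg hqi, if_pos hqj, if_neg hij,
          if_neg (show ¬(α (primeE m s) : ℕ) = 0 by rw [hqj, hα]; simp)]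
        have hXC : decE p m t α (primeE m s) = decE p m t β (primeE m j) := by
          refine midx_ext p m t fun k => ?_
          rw [hqj]
          simp only [decE_val, hα, hβ]
          all_goals (split_ifs <;> first | trivial | omega | (simp only [Fin.ext_iff] at *; omega))
        rw [hXC, hqj, smul_zero, smul_zero, zero_sub, smul_smul, smul_smul, ← neg_smul]
        congr 1
        rw [LtauF_prime]
        ring
      · -- q ∉ {i, j}
        rw [if_neg hqi, if_neg hqj,
          if_pos (show (α (primeE m s) : ℕ) = 0 by rw [hα, if_neg hqi, if_neg hqj])]
        simp

end Aux6

/-- a homogeneous derivation `φ ∈ Der(𝔑,𝒲)` of even ℤ-degree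
vanishing on `𝔑_[-1]` agrees on the elements `D_H(xᵢ xⱼ)`, `i,j ∈ Y₀`, with
`Σ_(r=1)^m λ_r Ψ⁽ʳ⁾` for suitable `λ_r ∈ F`.  (Here `xᵢ xⱼ = (1+δᵢⱼ) x^(εᵢ+εⱼ)`,
so it suffices to consider the basis elements `x^(εᵢ+εⱼ)`.) -/
theorem stmt18 (p m n : ℕ) (t : Fin (2 * m) → ℕ) (F : Type) [Field F]
    (hp : 3 < p) (hchar : CharP F p) (hm : 1 < m) (hn : 3 < n) (ht : ∀ i, 1 ≤ t i)
    (φ : ↥(frakN p m n t F) → W p m n t F)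
    (hder : IsDerOn p m n t F (frakN p m n t F) φ)
    (d : ℤ) (hhom : IsHomogOn p m n t F (frakN p m n t F) d φ) (hde : Even d)
    (hvan : ∀ x : ↥(frakN p m n t F), inDeg p m n t F (-1) (x : W p m n t F) → φ x = 0) :
    ∃ lam : Fin (2 * m) → F,
      ∀ (i j : Fin (2 * m)) (x : ↥(frakN p m n t F)) (α : MIdx p m t),
        (∀ k, (α k : ℕ) = (if k = i then 1 else 0) + (if k = j then 1 else 0)) →
        (x : W p m n t F) = DH p m n t F (xE p m n t F α ∅) →
        φ x = ∑ r ∈ Finset.univ.filter (fun r : Fin (2 * m) => (r : ℕ) < m),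
          lam r • PsiW p m n t F r (x : W p m n t F) := by
  classical
  have hple : ∀ k, p ≤ p ^ t k := fun k => Nat.le_self_pow (by have := ht k; omega) p
  have hpt : ∀ k, 0 < p ^ t k := fun k => by have := hple k; omega
  have hbig : ∀ k, 2 < p ^ t k - 1 := fun k => by have := hple k; omega
  have hm0 : 0 < m := by omega
  have h2F : (2 : F) ≠ 0 := by
    intro h2
    have h2' : ((2 : ℕ) : F) = 0 := by exact_mod_cast h2
    have hdvd : (p : ℕ) ∣ 2 := (CharP.cast_eq_zero_iff F p 2).mp h2'
    have := Nat.le_of_dvd (by norm_num) hdvd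
    omega
  have hφ0 : φ 0 = 0 := by
    have h := hder.1.2 0 0
    rw [zero_smul, zero_smul] at h
    exact h
  -- shape of φ on degree-zero generators
  have shapeOf : ∀ (β : MIdx p m t), (∀ k, (β k : ℕ) ≤ 2) →
      (∑ k, (β k : ℕ)) = 2 → ∀ (z : ↥(frakN p m n t F)),
      (z : W p m n t F) = DH p m n t F (xE p m n t F β ∅) →
      (∀ s, φ z (Sum.inl s) = 0) ∧
      (∀ (jj : Y m n) (b : BIdx p m n t), (∃ r, (b.1 r : ℕ) ≠ 0) → φ z jj b = 0) := by
    intro β hβ2 hβs z hz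
    have hker : ∀ (r : Fin (2 * m)) (jj : Y m n), pdE p m n t F r ((φ z) jj) = 0 := by
      intro r
      obtain ⟨δx, hδx⟩ : ∃ δx : MIdx p m t,
          ∀ k, (δx k : ℕ) = if k = primeE m r then 1 else 0 :=
        ⟨fun k => ⟨if k = primeE m r then 1 else 0, by have := hple k; split_ifs <;> omega⟩,
          fun k => rfl⟩
      have hdelEq : delW p m n t F r
          = tauF m F (primeE m r) • DH p m n t F (xE p m n t F δx ∅) :=
        LdelW_eq p m n t F r δx hδx
      have hdelmem : delW p m n t F r ∈ frakN p m n t F := by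
        rw [hdelEq]
        exact Submodule.smul_mem _ _ (LDH_mem p m n t F hm0 hbig δx
          (fun k => by rw [hδx]; split_ifs <;> omega))
      have hφdel : φ ⟨delW p m n t F r, hdelmem⟩ = 0 :=
        hvan _ (LinDeg_delW p m n t F r)
      have hbrmem : bra p m n t F (delW p m n t F r) (z : W p m n t F) ∈ frakN p m n t F := by
        rw [hz, Lbra_delW_DH p m n t F hpt r β]
        split
        · exact Submodule.zero_mem _
        · exact LDH_mem p m n t F hm0 hbig _ (fun k => by
            rw [decE_val]; have := hβ2 k; have := hβ2 r; split_ifs <;> omega)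
      have hφbr : φ ⟨bra p m n t F (delW p m n t F r) (z : W p m n t F), hbrmem⟩ = 0 := by
        by_cases h0 : (β r : ℕ) = 0
        · have hzero : (⟨bra p m n t F (delW p m n t F r) (z : W p m n t F), hbrmem⟩ :
              ↥(frakN p m n t F)) = 0 := by
            refine Subtype.ext ?_
            show bra p m n t F (delW p m n t F r) (z : W p m n t F) = 0
            rw [hz, Lbra_delW_DH p m n t F hpt r β, if_pos h0]
          rw [hzero, hφ0]
        · refine hvan _ ?_
          show inDeg p m n t F (-1) (bra p m n t F (delW p m n t F r) (z : W p m n t F))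
          rw [hz, Lbra_delW_DH p m n t F hpt r β, if_neg h0]
          have hs : ∑ k, ((decE p m t β r) k : ℕ) = 1 := by
            rw [Lsum_decE p m t β r h0, hβs]
          have h7 := LinDeg_DH p m n t F (decE p m t β r) 1 hs
          norm_num at h7
          exact h7
      have hrel : φ ⟨bra p m n t F (delW p m n t F r) (z : W p m n t F), hbrmem⟩
          = bra p m n t F (delW p m n t F r) (φ z)
            - bra p m n t F (z : W p m n t F) (φ ⟨delW p m n t F r, hdelmem⟩) :=
        hder.2.2 ⟨delW p m n t F r, hdelmem⟩ z hbrmem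
      rw [hφbr, hφdel, Lbra_zero_right, sub_zero] at hrel
      have hbz : bra p m n t F (delW p m n t F r) (φ z) = 0 := hrel.symm
      rw [Lbra_delW p m n t F hpt] at hbz
      intro jj
      exact congrFun hbz jj
    have hWmem := hder.2.1 z
    have hdeg : inDeg p m n t F d (φ z) := by
      have hz0 : inDeg p m n t F 0 (z : W p m n t F) := by
        rw [hz]
        have h8 := LinDeg_DH p m n t F β 2 hβs
        norm_num at h8
        exact h8
      have h0 := hhom 0 z hz0
      simpa using h0
    exact Lshape p m n t F d hde (φ z) hWmem hdeg hker
  refine ⟨fun _ => 0, fun i j x α hα hx => ?_⟩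
  obtain ⟨βx, hβx⟩ : ∃ βx : MIdx p m t, ∀ k, (βx k : ℕ)
      = (if k = i then 1 else 0) + (if k = primeE m j then 1 else 0) :=
    ⟨fun k => ⟨(if k = i then 1 else 0) + (if k = primeE m j then 1 else 0),
      by have := hple k; split_ifs <;> omega⟩, fun k => rfl⟩
  obtain ⟨γx, hγx⟩ : ∃ γx : MIdx p m t, ∀ k, (γx k : ℕ)
      = (if k = j then 1 else 0) + (if k = j then 1 else 0) :=
    ⟨fun k => ⟨(if k = j then 1 else 0) + (if k = j then 1 else 0),
      by have := hple k; split_ifs <;> omega⟩, fun k => rfl⟩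
  have hβ2 : ∀ k, (βx k : ℕ) ≤ 2 := fun k => by rw [hβx]; split_ifs <;> omega
  have hγ2 : ∀ k, (γx k : ℕ) ≤ 2 := fun k => by rw [hγx]; split_ifs <;> omega
  have hβsum : ∑ k, (βx k : ℕ) = 2 := by
    simp only [hβx]
    rw [Finset.sum_add_distrib, Finset.sum_ite_eq', Finset.sum_ite_eq']
    simp
  have hγsum : ∑ k, (γx k : ℕ) = 2 := by
    simp only [hγx]
    rw [Finset.sum_add_distrib, Finset.sum_ite_eq']
    simp
  have hGmem : DH p m n t F (xE p m n t F βx ∅) ∈ frakN p m n t F :=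
    LDH_mem p m n t F hm0 hbig βx hβ2
  have hG'mem : DH p m n t F (xE p m n t F γx ∅) ∈ frakN p m n t F :=
    LDH_mem p m n t F hm0 hbig γx hγ2
  obtain ⟨hGs1, hGs2⟩ := shapeOf βx hβ2 hβsum ⟨_, hGmem⟩ rfl
  obtain ⟨hG's1, hG's2⟩ := shapeOf γx hγ2 hγsum ⟨_, hG'mem⟩ rfl
  have hbv1 : bra p m n t F (DH p m n t F (xE p m n t F γx ∅))
      (φ ⟨DH p m n t F (xE p m n t F βx ∅), hGmem⟩) = 0 :=
    Lbra_vanish p m n t F _ _ (fun k => LDH_xE_inr p m n t F γx k)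
      (fun s b hb => LDH_supp2 p m n t F γx (Sum.inl s) b hb) hGs1 hGs2
  have hbv2 : bra p m n t F (DH p m n t F (xE p m n t F βx ∅))
      (φ ⟨DH p m n t F (xE p m n t F γx ∅), hG'mem⟩) = 0 :=
    Lbra_vanish p m n t F _ _ (fun k => LDH_xE_inr p m n t F βx k)
      (fun s b hb => LDH_supp2 p m n t F βx (Sum.inl s) b hb) hG's1 hG's2
  have hkey := Lkey_bra p m n t F hpt i j α βx γx hα hβx hγx
  have hbmem : bra p m n t F (DH p m n t F (xE p m n t F γx ∅))
      (DH p m n t F (xE p m n t F βx ∅)) ∈ frakN p m n t F := by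
    rw [hkey, ← hx]
    exact Submodule.smul_mem _ _ x.2
  have hder3 : φ ⟨bra p m n t F (DH p m n t F (xE p m n t F γx ∅))
        (DH p m n t F (xE p m n t F βx ∅)), hbmem⟩
      = bra p m n t F (DH p m n t F (xE p m n t F γx ∅))
          (φ ⟨DH p m n t F (xE p m n t F βx ∅), hGmem⟩)
        - bra p m n t F (DH p m n t F (xE p m n t F βx ∅))
          (φ ⟨DH p m n t F (xE p m n t F γx ∅), hG'mem⟩) :=
    hder.2.2 ⟨_, hG'mem⟩ ⟨_, hGmem⟩ hbmem
  rw [hbv1, hbv2, sub_zero] at hder3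
  have hxx : (⟨bra p m n t F (DH p m n t F (xE p m n t F γx ∅))
        (DH p m n t F (xE p m n t F βx ∅)), hbmem⟩ : ↥(frakN p m n t F))
      = ((if i = j then (2:F) else 1) * tauF m F j) • x := by
    refine Subtype.ext ?_
    show bra p m n t F (DH p m n t F (xE p m n t F γx ∅))
        (DH p m n t F (xE p m n t F βx ∅))
      = ((if i = j then (2:F) else 1) * tauF m F j) • (x : W p m n t F)
    rw [hkey, hx]
  rw [hxx, hder.1.2] at hder3
  have hc : ((if i = j then (2:F) else 1) * tauF m F j) ≠ 0 := by
    refine mul_ne_zero ?_ (LtauF_ne_zero m F j)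
    split_ifs
    · exact h2F
    · exact one_ne_zero
  have hφx : φ x = 0 := by
    funext jj
    funext b
    have h5 := congrFun (congrFun hder3 jj) b
    rw [Pi.smul_apply, Pi.smul_apply, smul_eq_mul] at h5
    show φ x jj b = (0 : F)
    rcases mul_eq_zero.mp h5 with h6 | h6
    · exact absurd h6 hc
    · exact h6
  rw [hφx]
  symm
  refine Finset.sum_eq_zero fun r _ => ?_
  simp

end HamEven
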